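/- arXiv:1202.3064 — 2 statements merged into one kernel-verified Lean document; each statement's English description precedes it below -/
import Mathlib

section
/- Let k ≥ 1, n = 4k+3, m = 2k+1, and let 1 ≥ λ₂ ≥ ... ≥ λₙ ≥ −1 be real numbers with 1 + λ₂ + ... + λₙ ≥ 0. Let α₁ < α₂ < ... < α_m be the increasing enumeration of the set {j : 3 ≤ j ≤ n, j ≡ 0 or 3 (mod 4)} (namely 3, 4, 7, 8, ..., n−4, n−3, n), and let β₁ < ... < β_{m−1} be the increasing enumeration of {j : 5 ≤ j ≤ n−1, j ≡ 1 or 2 (mod 4)} (namely 5, 6, 9, 10, ..., n−2, n−1). If both 1/n + ((n−m−1)/(n(m+1)))·λ₂ + Σ_{j=1}^{m} λ_{α_j}/((m−j+1)(m−j+2)) ≥ 0 and 1/n + ((n−m)/(n·m))·λ₂ + Σ_{j=1}^{m−1} λ_{β_j}/((m−j)(m−j+1)) ≥ 0 hold, then there exists an n×n symmetric doubly stochastic matrix whose eigenvalues, counted with algebraic multiplicity, are 1, λ₂, ..., λₙ. -/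
open Matrix Polynomial

/-- A real square matrix is doubly stochastic if its entries are nonnegative and all of its
row sums and column sums are equal to `1`. -/
def DoublyStochastic {n : ℕ} (D : Matrix (Fin n) (Fin n) ℝ) : Prop :=
  (∀ i j, 0 ≤ D i j) ∧ (∀ i, ∑ j, D i j = 1) ∧ (∀ j, ∑ i, D i j = 1)

/-!
Soules' construction. Split the `n = 2m + 1` coordinates into blocks of sizes `m + 1` and `m`.
The all-ones vector, the vector equal to `m` on the first block and to `-(m + 1)` on the second,
and inside each block the Haar-type vectors `s_r = (…, 0, -(r + 1), 1, …, 1)` (with `r + 1`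
trailing ones) are pairwise orthogonal, so `D = ∑ λ_v v vᵀ / ‖v‖²` is symmetric, has
spectrum `(λ_v)` and, giving the all-ones vector the eigenvalue `1`, has row sums `1`.

The `λ_{α_j}` go to the first block and the `λ_{β_j}` to the second, so that inside a block
the eigenvalue `λ_r` of `s_r` increases with `r`. An entry of `D` inside a block is then a base
term, plus the tail `∑_{r ≥ w} λ_r / ((r+1)(r+2))` of the series occurring in the hypothesis,
plus a pivot term `c λ_{w-1} / (w + 1)` with `-1 ≤ c ≤ w`. Comparing with the telescoping series `∑ 1 / ((r+1)(r+2))` and using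
monotonicity, a nonpositive pivot is dominated by the head of the series and a positive one by
its tail and by `λ ≤ λ₂ ≤ 1`.
-/

namespace Matrix

variable {K ι κ : Type*} [Field K] [Fintype ι] [DecidableEq ι]

theorem transpose_mul_diagonal_mul_apply (P : Matrix ι κ K) (d : ι → K) (x y : κ) :
    (Pᵀ * diagonal d * P) x y = ∑ i, P i x * d i * P i y := by
  rw [mul_apply]
  simp [mul_diagonal]

theorem isSymm_transpose_mul_diagonal_mul (P : Matrix ι κ K) (d : ι → K) :
    (Pᵀ * diagonal d * P).IsSymm := by
  simp [IsSymm, transpose_mul, Matrix.mul_assoc]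

theorem charpoly_transpose_mul_diagonal_mul [Fintype κ] [DecidableEq κ] (P : Matrix ι κ K)
    {c : ι → K} (hP : P * Pᵀ = diagonal c) (hc : ∀ i, c i ≠ 0)
    (hcard : Fintype.card ι = Fintype.card κ) (μ : ι → K) :
    (Pᵀ * diagonal (μ / c) * P).charpoly = ∏ i, (X - C (μ i)) := by
  have hdiag : diagonal (μ / c) * P * Pᵀ = diagonal μ := by
    rw [Matrix.mul_assoc, hP, diagonal_mul_diagonal]
    congr 1
    ext i
    simp [div_mul_cancel₀ _ (hc i)]
  have := charpoly_mul_comm' Pᵀ (diagonal (μ / c) * P)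
  rw [← Matrix.mul_assoc, hdiag, charpoly_diagonal, hcard] at this
  exact (isRegular_X_pow _).left.eq_iff.mp this

theorem transpose_mul_diagonal_mul_mulVec_one [Fintype κ] (P : Matrix ι κ K) {c : ι → K}
    (hP : P * Pᵀ = diagonal c) (hc : ∀ i, c i ≠ 0) {μ : ι → K} {i₀ : ι}
    (hrow : ∀ x, P i₀ x = 1) (hμ : μ i₀ = 1) :
    (Pᵀ * diagonal (μ / c) * P) *ᵥ (fun _ => 1) = fun _ => 1 := by
  have hone : (fun _ => 1 : κ → K) = Pᵀ *ᵥ Pi.single i₀ 1 := by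
    ext x
    simp [mulVec_single, hrow]
  have hsingle : diagonal (μ / c) *ᵥ (diagonal c *ᵥ Pi.single i₀ 1) = Pi.single i₀ 1 := by
    ext i
    by_cases h : i = i₀
    · subst h
      simp [mulVec_diagonal, hμ, hc i]
    · simp [mulVec_diagonal, h]
  rw [hone, ← mulVec_mulVec, ← mulVec_mulVec, mulVec_mulVec _ P, hP, hsingle]

end Matrix

theorem doublyStochastic_reindex {κ : Type*} [Fintype κ] {n : ℕ} (e : κ ≃ Fin n)
    {D : Matrix κ κ ℝ} (hsymm : D.IsSymm) (hnonneg : ∀ x y, 0 ≤ D x y)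
    (hone : D *ᵥ (fun _ => 1) = fun _ => 1) : DoublyStochastic (reindex e e D) := by
  have hrow : ∀ i, ∑ j, reindex e e D i j = 1 := fun i => by
    simpa [mulVec, dotProduct] using (e.symm.sum_comp _).trans (congrFun hone (e.symm i))
  refine ⟨fun i j => hnonneg _ _, hrow, fun j => ?_⟩
  rw [← hrow j]
  exact Finset.sum_congr rfl fun i _ => (hsymm.reindex e).apply j i

open Finset

/-- The `r`-th Soules vector of a block, indexed by the distance `u` from the end of the block. -/
def soules (r u : ℕ) : ℝ := if u ≤ r then 1 else if u = r + 1 then -(r + 1 : ℝ) else 0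

theorem soules_of_le {r u : ℕ} (h : u ≤ r) : soules r u = 1 := if_pos h

theorem soules_self_add_one (r : ℕ) : soules r (r + 1) = -(r + 1 : ℝ) := by simp [soules]

theorem soules_of_add_two_le {r u : ℕ} (h : r + 2 ≤ u) : soules r u = 0 := by
  simp [soules, show ¬u ≤ r by omega, show u ≠ r + 1 by omega]

theorem neg_le_soules (r u : ℕ) : -(r + 1 : ℝ) ≤ soules r u := by
  unfold soules
  split_ifs <;> linarith

theorem soules_le_one (r u : ℕ) : soules r u ≤ 1 := by
  unfold soules
  split_ifs <;> linarith

theorem sum_range_soules_mul {r N : ℕ} (hN : r + 2 ≤ N) (f : ℕ → ℝ) :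
    ∑ u ∈ range N, soules r u * f u = ∑ u ∈ range (r + 1), f u - (r + 1) * f (r + 1) := by
  obtain ⟨N, rfl⟩ := Nat.exists_eq_add_of_le hN
  have htail : ∑ u ∈ range N, soules r (r + 2 + u) * f (r + 2 + u) = 0 :=
    sum_eq_zero fun u _ => by rw [soules_of_add_two_le (by omega), zero_mul]
  rw [sum_range_add, htail, sum_range_succ, soules_self_add_one,
    sum_congr rfl fun u hu => by rw [soules_of_le (Nat.lt_succ_iff.mp (mem_range.mp hu)), one_mul]]
  ring

theorem sum_fin_soules {r N : ℕ} (hN : r + 2 ≤ N) : ∑ u : Fin N, soules r u = 0 := by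
  rw [Fin.sum_univ_eq_sum_range (soules r)]
  simpa using sum_range_soules_mul hN 1

theorem sum_fin_soules_mul_soules {r s N : ℕ} (hr : r + 2 ≤ N) (hs : s + 2 ≤ N) :
    ∑ u : Fin N, soules r u * soules s u = if r = s then (r + 1) * (r + 2) else 0 := by
  rw [Fin.sum_univ_eq_sum_range (fun u => soules r u * soules s u)]
  rcases lt_trichotomy r s with h | rfl | h
  · rw [sum_range_soules_mul hr, if_neg h.ne,
      sum_congr rfl fun u hu => soules_of_le (by rw [mem_range] at hu; omega), soules_of_le h]
    simp
  · rw [sum_range_soules_mul hr, if_pos rfl, soules_self_add_one,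
      sum_congr rfl fun u hu => soules_of_le (Nat.lt_succ_iff.mp (mem_range.mp hu))]
    simp only [sum_const, card_range, nsmul_eq_mul, mul_one]
    push_cast
    ring
  · simp_rw [mul_comm (soules r _)]
    rw [sum_range_soules_mul hs, if_neg h.ne',
      sum_congr rfl fun u hu => soules_of_le (by rw [mem_range] at hu; omega), soules_of_le h]
    simp

theorem sum_Ico_one_div_succ_mul_succ_succ {a b : ℕ} (hab : a ≤ b) :
    ∑ r ∈ Ico a b, 1 / (((r : ℝ) + 1) * ((r : ℝ) + 2)) =
      1 / ((a : ℝ) + 1) - 1 / ((b : ℝ) + 1) := by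
  induction b, hab using Nat.le_induction with
  | base => simp
  | succ b hab ih =>
    rw [sum_Ico_succ_top hab, ih]
    push_cast
    field_simp
    ring

theorem sum_range_mul_soules_mul_soules_add_one (g : ℕ → ℝ) {u v R : ℕ} (hu : u ≤ v + 1)
    (hv : v < R) :
    ∑ r ∈ range R, g r * (soules r u * soules r (v + 1)) =
      -(v + 1) * soules v u * g v + ∑ r ∈ Ico (v + 1) R, g r := by
  have hlow : ∑ r ∈ range v, g r * (soules r u * soules r (v + 1)) = 0 :=
    sum_eq_zero fun r hr => by
      rw [soules_of_add_two_le (u := v + 1) (by rw [mem_range] at hr; omega), mul_zero, mul_zero]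
  have hhigh : ∑ r ∈ Ico (v + 1) R, g r * (soules r u * soules r (v + 1)) =
      ∑ r ∈ Ico (v + 1) R, g r :=
    sum_congr rfl fun r hr => by
      rw [mem_Ico] at hr
      rw [soules_of_le (by omega), soules_of_le hr.1, mul_one, mul_one]
  rw [range_eq_Ico, ← sum_Ico_consecutive _ (Nat.zero_le (v + 1)) hv, ← range_eq_Ico,
    sum_range_succ, hlow, hhigh, soules_self_add_one]
  ring

/-- `c * h v / (v + 2)` is the pivot term of an entry of a Soules block whose column is at
distance `v + 1` from the end of the block; `c = v + 1` on the diagonal and `c = -1` off it. -/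
theorem pivot_add_sum_Ico_nonneg (h : ℕ → ℝ) {R v : ℕ} {ℓ base c : ℝ} (hv : v < R)
    (hmono : MonotoneOn h (Set.Iio R)) (hℓ : h v ≤ ℓ) (hbase : ℓ / (R + 1) ≤ base)
    (hsum : 0 ≤ base + ∑ r ∈ range R, h r / (((r : ℝ) + 1) * ((r : ℝ) + 2)))
    (hc₁ : -1 ≤ c) (hc₂ : c ≤ v + 1) :
    0 ≤ base + c * h v / (v + 2) +
      ∑ r ∈ Ico (v + 1) R, h r / (((r : ℝ) + 1) * ((r : ℝ) + 2)) := by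
  set g : ℕ → ℝ := fun r => h r / (((r : ℝ) + 1) * ((r : ℝ) + 2))
  have hvR : v ∈ Set.Iio R := hv
  have hsplit := sum_Ico_consecutive g (Nat.zero_le (v + 1)) hv
  rw [← range_eq_Ico, ← range_eq_Ico] at hsplit
  rcases le_or_gt (h v) 0 with hneg | hpos
  · have hhead : ∑ r ∈ range (v + 1), g r ≤ h v * (v + 1) / (v + 2) := by
      calc ∑ r ∈ range (v + 1), g r
          ≤ ∑ r ∈ range (v + 1), h v * (1 / (((r : ℝ) + 1) * ((r : ℝ) + 2))) := by
            refine sum_le_sum fun r hr => ?_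
            rw [mem_range] at hr
            rw [mul_one_div]
            dsimp only [g]
            gcongr
            exact hmono (Set.mem_Iio.mpr (by omega)) hvR (by omega)
        _ = h v * (v + 1) / (v + 2) := by
            rw [← mul_sum, range_eq_Ico, sum_Ico_one_div_succ_mul_succ_succ (Nat.zero_le _)]
            push_cast
            field_simp
            ring
    have hc : h v * (v + 1) / (v + 2) ≤ c * h v / (v + 2) :=
      div_le_div_of_nonneg_right (by nlinarith) (by positivity)
    linarith
  · have htail : h v / (v + 2) - h v / (R + 1) ≤ ∑ r ∈ Ico (v + 1) R, g r := by
      calc h v / (v + 2) - h v / (R + 1)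
          = ∑ r ∈ Ico (v + 1) R, h v * (1 / (((r : ℝ) + 1) * ((r : ℝ) + 2))) := by
            rw [← mul_sum, sum_Ico_one_div_succ_mul_succ_succ hv]
            push_cast
            ring
        _ ≤ ∑ r ∈ Ico (v + 1) R, g r := by
            refine sum_le_sum fun r hr => ?_
            rw [mem_Ico] at hr
            rw [mul_one_div]
            dsimp only [g]
            gcongr
            exact hmono hvR (Set.mem_Iio.mpr hr.2) (by omega)
    have hc : -h v / (v + 2) ≤ c * h v / (v + 2) :=
      div_le_div_of_nonneg_right (by nlinarith) (by positivity)
    have hR : h v / ((R : ℝ) + 1) ≤ ℓ / ((R : ℝ) + 1) := by gcongr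
    rw [neg_div] at hc
    linarith

theorem add_sum_mul_soules_mul_soules_nonneg (h : ℕ → ℝ) {R : ℕ} {ℓ base : ℝ}
    (hmono : MonotoneOn h (Set.Iio R)) (hℓ : ∀ r < R, h r ≤ ℓ)
    (hbase : ℓ / (R + 1) ≤ base)
    (hsum : 0 ≤ base + ∑ r ∈ range R, h r / (((r : ℝ) + 1) * ((r : ℝ) + 2)))
    {u w : ℕ} (hu : u ≤ R) (hw : w ≤ R) :
    0 ≤ base +
      ∑ r ∈ range R, h r / (((r : ℝ) + 1) * ((r : ℝ) + 2)) * (soules r u * soules r w) := by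
  wlog huw : u ≤ w generalizing u w
  · simpa only [mul_comm (soules _ w) (soules _ u)] using this hw hu (by omega)
  cases w with
  | zero =>
    obtain rfl : u = 0 := by omega
    simpa [soules_of_le] using hsum
  | succ v =>
    rw [sum_range_mul_soules_mul_soules_add_one _ huw (by omega)]
    have hpivot : -((v : ℝ) + 1) * soules v u * (h v / (((v : ℝ) + 1) * ((v : ℝ) + 2))) =
        -soules v u * h v / (v + 2) := by
      field_simp
    have := pivot_add_sum_Ico_nonneg h (c := -soules v u) (by omega) hmono (hℓ v (by omega))
      hbase hsum (by linarith [soules_le_one v u]) (by linarith [neg_le_soules v u])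
    linarith

section SoulesMatrix

variable (m : ℕ)

/-- Columns are the blocks `Fin (m + 1)` and `Fin m`, each indexed backwards from its end; up to
this permutation of the coordinates these are the rows of Soules' orthogonal matrix. -/
def soulesBasis : Matrix (Fin 2 ⊕ Fin m ⊕ Fin (m - 1)) (Fin (m + 1) ⊕ Fin m) ℝ :=
  Matrix.of fun
    | .inl 0, _ => 1
    | .inl 1, x => Sum.elim (fun _ => (m : ℝ)) (fun _ => -(m + 1 : ℝ)) x
    | .inr (.inl r), x => Sum.elim (fun u : Fin (m + 1) => soules r u) 0 x
    | .inr (.inr r), x => Sum.elim 0 (fun u : Fin m => soules r u) x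

def soulesNormSq : Fin 2 ⊕ Fin m ⊕ Fin (m - 1) → ℝ
  | .inl 0 => 2 * m + 1
  | .inl 1 => m * (m + 1) * (2 * m + 1)
  | .inr (.inl r) => (r + 1) * (r + 2)
  | .inr (.inr r) => (r + 1) * (r + 2)

def soulesSpectrum (l₂ : ℝ) (a b : ℕ → ℝ) : Fin 2 ⊕ Fin m ⊕ Fin (m - 1) → ℝ
  | .inl 0 => 1
  | .inl 1 => l₂
  | .inr (.inl r) => a r
  | .inr (.inr r) => b r

noncomputable def soulesMatrix (l₂ : ℝ) (a b : ℕ → ℝ) :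
    Matrix (Fin (m + 1) ⊕ Fin m) (Fin (m + 1) ⊕ Fin m) ℝ :=
  (soulesBasis m)ᵀ * diagonal (soulesSpectrum m l₂ a b / soulesNormSq m) * soulesBasis m

theorem soulesNormSq_pos (hm : 0 < m) (i : Fin 2 ⊕ Fin m ⊕ Fin (m - 1)) :
    0 < soulesNormSq m i := by
  rcases i with i | r | r <;> (try fin_cases i) <;> simp only [soulesNormSq] <;> positivity

theorem soulesBasis_mul_transpose :
    soulesBasis m * (soulesBasis m)ᵀ = diagonal (soulesNormSq m) := by
  ext i j
  rw [mul_apply]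
  rcases i with i | r | r <;> rcases j with j | s | s <;> (try fin_cases i) <;>
    (try fin_cases j) <;>
    simp (disch := omega) [soulesBasis, soulesNormSq, ← mul_sum, ← sum_mul, sum_fin_soules,
      sum_fin_soules_mul_soules, diagonal_apply, Fin.val_inj] <;> ring

variable {m} (l₂ : ℝ) (a b : ℕ → ℝ)

theorem soulesMatrix_isSymm : (soulesMatrix m l₂ a b).IsSymm :=
  isSymm_transpose_mul_diagonal_mul _ _

theorem soulesMatrix_mulVec_one (hm : 0 < m) :
    soulesMatrix m l₂ a b *ᵥ (fun _ => 1) = fun _ => 1 :=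
  transpose_mul_diagonal_mul_mulVec_one _ (soulesBasis_mul_transpose m)
    (fun i => (soulesNormSq_pos m hm i).ne') (i₀ := .inl 0) (fun _ => rfl) rfl

theorem soulesMatrix_charpoly (hm : 0 < m) :
    (soulesMatrix m l₂ a b).charpoly = ∏ i, (X - C (soulesSpectrum m l₂ a b i)) :=
  charpoly_transpose_mul_diagonal_mul _ (soulesBasis_mul_transpose m)
    (fun i => (soulesNormSq_pos m hm i).ne') (by simp; omega) _

theorem soulesMatrix_inl_inl (u w : Fin (m + 1)) :
    soulesMatrix m l₂ a b (.inl u) (.inl w) =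
      1 / (2 * m + 1) + m * l₂ / ((m + 1) * (2 * m + 1)) +
      ∑ r ∈ range m, a r / (((r : ℝ) + 1) * ((r : ℝ) + 2)) * (soules r u * soules r w) := by
  rw [soulesMatrix, transpose_mul_diagonal_mul_apply]
  simp only [soulesBasis, of_apply, Pi.div_apply, soulesSpectrum, soulesNormSq,
    Fintype.sum_sum_type, Fin.sum_univ_two, Sum.elim_inl, Pi.zero_apply, one_mul,
    mul_one, zero_mul, mul_zero, sum_const_zero, add_zero]
  rw [Fin.sum_univ_eq_sum_range (fun r => soules r u * (a r / (((r : ℝ) + 1) * ((r : ℝ) + 2))) *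
    soules r w) m]
  congr 1
  · field_simp
  · exact sum_congr rfl fun r _ => by ring

theorem soulesMatrix_inr_inr (u w : Fin m) :
    soulesMatrix m l₂ a b (.inr u) (.inr w) =
      1 / (2 * m + 1) + (m + 1) * l₂ / (m * (2 * m + 1)) +
      ∑ r ∈ range (m - 1), b r / (((r : ℝ) + 1) * ((r : ℝ) + 2)) *
        (soules r u * soules r w) := by
  rw [soulesMatrix, transpose_mul_diagonal_mul_apply]
  simp only [soulesBasis, of_apply, Pi.div_apply, soulesSpectrum, soulesNormSq,
    Fintype.sum_sum_type, Fin.sum_univ_two, Sum.elim_inr, Pi.zero_apply, one_mul,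
    mul_one, zero_mul, mul_zero, sum_const_zero, zero_add]
  rw [Fin.sum_univ_eq_sum_range (fun r => soules r u * (b r / (((r : ℝ) + 1) * ((r : ℝ) + 2))) *
    soules r w) (m - 1)]
  congr 1
  · field_simp
  · exact sum_congr rfl fun r _ => by ring

theorem soulesMatrix_inl_inr (u : Fin (m + 1)) (w : Fin m) :
    soulesMatrix m l₂ a b (.inl u) (.inr w) = (1 - l₂) / (2 * m + 1) := by
  rw [soulesMatrix, transpose_mul_diagonal_mul_apply]
  simp only [soulesBasis, of_apply, Pi.div_apply, soulesSpectrum, soulesNormSq,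
    Fintype.sum_sum_type, Fin.sum_univ_two, Sum.elim_inl, Sum.elim_inr, Pi.zero_apply, one_mul,
    mul_one, zero_mul, mul_zero, sum_const_zero, add_zero]
  have : (m : ℝ) ≠ 0 := Nat.cast_ne_zero.mpr w.pos.ne'
  field_simp
  ring

variable {l₂ a b}

theorem soulesMatrix_nonneg (hl₂ : l₂ ≤ 1)
    (ha : MonotoneOn a (Set.Iio m)) (hal₂ : ∀ r < m, a r ≤ l₂)
    (hb : MonotoneOn b (Set.Iio (m - 1))) (hbl₂ : ∀ r < m - 1, b r ≤ l₂)
    (hsa : 0 ≤ 1 / (2 * m + 1) + m * l₂ / ((m + 1) * (2 * m + 1)) +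
      ∑ r ∈ range m, a r / (((r : ℝ) + 1) * ((r : ℝ) + 2)))
    (hsb : 0 ≤ 1 / (2 * m + 1) + (m + 1) * l₂ / (m * (2 * m + 1)) +
      ∑ r ∈ range (m - 1), b r / (((r : ℝ) + 1) * ((r : ℝ) + 2)))
    (x y : Fin (m + 1) ⊕ Fin m) : 0 ≤ soulesMatrix m l₂ a b x y := by
  have hcross : 0 ≤ (1 - l₂) / (2 * m + 1) := div_nonneg (by linarith) (by positivity)
  rcases x with u | u <;> rcases y with w | w
  · have hbase :
        l₂ / ((m : ℝ) + 1) ≤ 1 / (2 * m + 1) + m * l₂ / ((m + 1) * (2 * m + 1)) := by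
      have : 1 / (2 * m + 1) + m * l₂ / ((m + 1) * (2 * m + 1)) - l₂ / ((m : ℝ) + 1) =
          (1 - l₂) / (2 * m + 1) := by
        field_simp
        ring
      linarith
    rw [soulesMatrix_inl_inl]
    exact add_sum_mul_soules_mul_soules_nonneg a ha hal₂ hbase hsa (by omega) (by omega)
  · rwa [soulesMatrix_inl_inr]
  · rwa [← (soulesMatrix_isSymm _ _ _).apply, soulesMatrix_inl_inr]
  · have hm : ((m - 1 : ℕ) : ℝ) + 1 = m := by
      rw [← Nat.cast_add_one, Nat.sub_add_cancel u.pos]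
    have hbase : l₂ / (((m - 1 : ℕ) : ℝ) + 1) ≤
        1 / (2 * m + 1) + (m + 1) * l₂ / (m * (2 * m + 1)) := by
      have : (m : ℝ) ≠ 0 := Nat.cast_ne_zero.mpr u.pos.ne'
      have : 1 / (2 * m + 1) + (m + 1) * l₂ / (m * (2 * m + 1)) - l₂ / (m : ℝ) =
          (1 - l₂) / (2 * m + 1) := by
        field_simp
        ring
      rw [hm]
      linarith
    rw [soulesMatrix_inr_inr]
    exact add_sum_mul_soules_mul_soules_nonneg b hb hbl₂ hbase hsb (by omega) (by omega)

end SoulesMatrix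

def alphaIdx (j : ℕ) : ℕ := if Odd j then 2 * j + 1 else 2 * j

def betaIdx (j : ℕ) : ℕ := if Odd j then 2 * j + 3 else 2 * j + 2

theorem alphaIdx_mono : Monotone alphaIdx := fun i j hij => by
  simp only [alphaIdx, Nat.odd_iff]
  split_ifs <;> omega

theorem betaIdx_mono : Monotone betaIdx := fun i j hij => by
  simp only [betaIdx, Nat.odd_iff]
  split_ifs <;> omega

theorem alphaIdx_mem_Icc {m : ℕ} (j : ℕ) (h₁ : 1 ≤ j) (h₂ : j ≤ m) :
    alphaIdx j ∈ Set.Icc 2 (2 * m + 1) := by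
  simp only [alphaIdx, Nat.odd_iff, Set.mem_Icc]
  split_ifs <;> omega

theorem betaIdx_mem_Icc {m : ℕ} (j : ℕ) (h₁ : 1 ≤ j) (h₂ : j ≤ m - 1) :
    betaIdx j ∈ Set.Icc 2 (2 * m + 1) := by
  simp only [betaIdx, Nat.odd_iff, Set.mem_Icc]
  split_ifs <;> omega

theorem image_alphaIdx_union_image_betaIdx {k m : ℕ} (hm : m = 2 * k + 1) :
    (range m).image (fun r => alphaIdx (m - r)) ∪
      (range (m - 1)).image (fun r => betaIdx (m - 1 - r)) = Icc 3 (2 * m + 1) := by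
  ext j
  simp only [mem_union, mem_image, mem_range, mem_Icc, alphaIdx, betaIdx, Nat.odd_iff]
  constructor
  · rintro (⟨r, hr, rfl⟩ | ⟨r, hr, rfl⟩) <;> split_ifs <;> omega
  · intro hj
    by_cases h : j % 4 = 0 ∨ j % 4 = 3
    · exact Or.inl ⟨m - j / 2, by omega, by split_ifs <;> omega⟩
    · exact Or.inr ⟨m - j / 2, by omega, by split_ifs <;> omega⟩

theorem disjoint_image_alphaIdx_image_betaIdx (m : ℕ) :
    Disjoint ((range m).image (fun r => alphaIdx (m - r)))
      ((range (m - 1)).image (fun r => betaIdx (m - 1 - r))) := by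
  simp only [disjoint_left, mem_image, mem_range, alphaIdx, betaIdx, Nat.odd_iff]
  rintro _ ⟨r, hr, rfl⟩ ⟨s, hs, h⟩
  split_ifs at h <;> omega

theorem prod_soulesSpectrum {k m : ℕ} (hm : m = 2 * k + 1) (L : ℕ → ℝ) :
    ∏ i, (X - C (soulesSpectrum m (L 2) (fun r => L (alphaIdx (m - r)))
      (fun r => L (betaIdx (m - 1 - r))) i)) =
      (X - C 1) * ∏ j ∈ Icc 2 (2 * m + 1), (X - C (L j)) := by
  have hinjα : Set.InjOn (fun r => alphaIdx (m - r)) (range m) := by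
    intro r hr s hs h
    simp only [coe_range, Set.mem_Iio, alphaIdx, Nat.odd_iff] at hr hs h
    split_ifs at h <;> omega
  have hinjβ : Set.InjOn (fun r => betaIdx (m - 1 - r)) (range (m - 1)) := by
    intro r hr s hs h
    simp only [coe_range, Set.mem_Iio, betaIdx, Nat.odd_iff] at hr hs h
    split_ifs at h <;> omega
  have hIcc : Icc 2 (2 * m + 1) = insert 2 (Icc 3 (2 * m + 1)) := by
    ext j
    simp only [mem_insert, mem_Icc]
    omega
  rw [hIcc, prod_insert (by simp), ← image_alphaIdx_union_image_betaIdx hm,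
    prod_union (disjoint_image_alphaIdx_image_betaIdx m), prod_image hinjα, prod_image hinjβ]
  simp only [Fintype.prod_sum_type, Fin.prod_univ_two, soulesSpectrum]
  rw [Fin.prod_univ_eq_prod_range (fun r => X - C (L (alphaIdx (m - r)))),
    Fin.prod_univ_eq_prod_range (fun r => X - C (L (betaIdx (m - 1 - r))))]
  ring

section Reflect

variable {L : ℕ → ℝ} {φ : ℕ → ℕ} {M N : ℕ}

theorem monotoneOn_comp_tsub (hL : AntitoneOn L (Set.Icc 2 N)) (hφ : Monotone φ)
    (hφN : ∀ j, 1 ≤ j → j ≤ M → φ j ∈ Set.Icc 2 N) :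
    MonotoneOn (fun r => L (φ (M - r))) (Set.Iio M) := fun r hr s hs hrs => by
  rw [Set.mem_Iio] at hr hs
  exact hL (hφN _ (by omega) (by omega)) (hφN _ (by omega) (by omega)) (hφ (by omega))

theorem comp_tsub_le (hL : AntitoneOn L (Set.Icc 2 N))
    (hφN : ∀ j, 1 ≤ j → j ≤ M → φ j ∈ Set.Icc 2 N) {r : ℕ} (hr : r < M) :
    L (φ (M - r)) ≤ L 2 := by
  have hmem := hφN (M - r) (by omega) (by omega)
  exact hL ⟨le_rfl, hmem.1.trans hmem.2⟩ hmem hmem.1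

end Reflect

theorem sum_Icc_div_eq_sum_range (M : ℕ) (f : ℕ → ℝ) :
    ∑ j ∈ Icc 1 M, f j / (((M - j + 1) * (M - j + 2) : ℕ) : ℝ) =
      ∑ r ∈ range M, f (M - r) / (((r : ℝ) + 1) * ((r : ℝ) + 2)) := by
  refine sum_nbij' (fun j => M - j) (fun r => M - r) ?_ ?_ ?_ ?_ ?_ <;> intro j hj <;>
    simp only [mem_Icc, mem_range] at hj ⊢
  · omega
  · omega
  · omega
  · omega
  · rw [Nat.sub_sub_self hj.2]
    push_cast
    ring

theorem alpha_condition_eq (m : ℕ) (L : ℕ → ℝ) :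
    1 / ((2 * m + 1 : ℕ) : ℝ) +
        (((2 * m + 1 : ℕ) : ℝ) - m - 1) / (((2 * m + 1 : ℕ) : ℝ) * (m + 1)) * L 2 +
        ∑ j ∈ Icc 1 m, L (if Odd j then 2 * j + 1 else 2 * j) /
          (((m - j + 1) * (m - j + 2) : ℕ) : ℝ) =
      1 / (2 * m + 1) + m * L 2 / ((m + 1) * (2 * m + 1)) +
        ∑ r ∈ range m, L (alphaIdx (m - r)) / (((r : ℝ) + 1) * ((r : ℝ) + 2)) := by
  rw [sum_Icc_div_eq_sum_range]
  congr 1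
  push_cast
  field_simp
  ring

theorem beta_condition_eq (m : ℕ) (L : ℕ → ℝ) :
    1 / ((2 * m + 1 : ℕ) : ℝ) +
        (((2 * m + 1 : ℕ) : ℝ) - m) / (((2 * m + 1 : ℕ) : ℝ) * m) * L 2 +
        ∑ j ∈ Icc 1 (m - 1), L (if Odd j then 2 * j + 3 else 2 * j + 2) /
          (((m - j) * (m - j + 1) : ℕ) : ℝ) =
      1 / (2 * m + 1) + (m + 1) * L 2 / (m * (2 * m + 1)) +
        ∑ r ∈ range (m - 1), L (betaIdx (m - 1 - r)) / (((r : ℝ) + 1) * ((r : ℝ) + 2)) := by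
  have hden : ∀ j ∈ Icc 1 (m - 1), (m - j) * (m - j + 1) = (m - 1 - j + 1) * (m - 1 - j + 2) :=
    fun j hj => by rw [mem_Icc] at hj; congr 1 <;> omega
  rw [sum_congr rfl fun j hj => by rw [hden j hj], sum_Icc_div_eq_sum_range]
  congr 1
  push_cast
  field_simp
  ring

theorem sdiep_4k3_general (k n m : ℕ) (hn : n = 4 * k + 3) (hm : m = 2 * k + 1)
    (L : ℕ → ℝ) (hub : L 2 ≤ 1)
    (hdec : ∀ j, 2 ≤ j → j < n → L (j + 1) ≤ L j)
    (hcond1 : 0 ≤ 1 / (n : ℝ) + ((n : ℝ) - (m : ℝ) - 1) / ((n : ℝ) * ((m : ℝ) + 1)) * L 2 +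
        ∑ j ∈ Finset.Icc 1 m, L (if Odd j then 2 * j + 1 else 2 * j) /
          (((m - j + 1) * (m - j + 2) : ℕ) : ℝ))
    (hcond2 : 0 ≤ 1 / (n : ℝ) + ((n : ℝ) - (m : ℝ)) / ((n : ℝ) * (m : ℝ)) * L 2 +
        ∑ j ∈ Finset.Icc 1 (m - 1), L (if Odd j then 2 * j + 3 else 2 * j + 2) /
          (((m - j) * (m - j + 1) : ℕ) : ℝ)) :
    ∃ D : Matrix (Fin n) (Fin n) ℝ, D.IsSymm ∧ DoublyStochastic D ∧
      D.charpoly = (X - C 1) * ∏ j ∈ Finset.Icc 2 n, (X - C (L j)) := by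
  obtain rfl : n = 2 * m + 1 := by omega
  rw [alpha_condition_eq] at hcond1
  rw [beta_condition_eq] at hcond2
  have hm₀ : 0 < m := by omega
  have hL : AntitoneOn L (Set.Icc 2 (2 * m + 1)) :=
    antitoneOn_of_add_one_le Set.ordConnected_Icc fun j _ hj hj₁ => hdec j hj.1 hj₁.2
  let e : Fin (m + 1) ⊕ Fin m ≃ Fin (2 * m + 1) := finSumFinEquiv.trans (finCongr (by omega))
  refine ⟨reindex e e (soulesMatrix m (L 2) (fun r => L (alphaIdx (m - r)))
    (fun r => L (betaIdx (m - 1 - r)))), (soulesMatrix_isSymm _ _ _).reindex e,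
    doublyStochastic_reindex e (soulesMatrix_isSymm _ _ _)
      (soulesMatrix_nonneg hub (monotoneOn_comp_tsub hL alphaIdx_mono alphaIdx_mem_Icc)
        (fun _ => comp_tsub_le hL alphaIdx_mem_Icc)
        (monotoneOn_comp_tsub hL betaIdx_mono betaIdx_mem_Icc)
        (fun _ => comp_tsub_le hL betaIdx_mem_Icc) hcond1 hcond2)
      (soulesMatrix_mulVec_one _ _ _ hm₀), ?_⟩
  rw [charpoly_reindex, soulesMatrix_charpoly _ _ _ hm₀, prod_soulesSpectrum hm]

/-- Case `n = 4k+3`, `m = 2k+1`: with `α_j = 2j+1` for `j` odd and `2j` for `j` even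
(the increasing enumeration `3, 4, 7, 8, …, n-4, n-3, n`), and `β_j = 2j+3` for `j` odd and
`2j+2` for `j` even (the increasing enumeration `5, 6, 9, 10, …, n-2, n-1`), if both
`1/n + ((n-m-1)/(n(m+1)))λ₂ + ∑_{j=1}^{m} λ_{α_j}/((m-j+1)(m-j+2)) ≥ 0` and
`1/n + ((n-m)/(nm))λ₂ + ∑_{j=1}^{m-1} λ_{β_j}/((m-j)(m-j+1)) ≥ 0`, then `1, λ₂, …, λₙ`
is the spectrum of an `n × n` symmetric doubly stochastic matrix. -/
theorem sdiep_4k3 (k n m : ℕ) (hk : 1 ≤ k) (hn : n = 4 * k + 3) (hm : m = 2 * k + 1)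
    (L : ℕ → ℝ) (hub : L 2 ≤ 1)
    (hdec : ∀ j, 2 ≤ j → j < n → L (j + 1) ≤ L j)
    (hlb : -1 ≤ L n)
    (htr : 0 ≤ 1 + ∑ j ∈ Finset.Icc 2 n, L j)
    (hcond1 : 0 ≤ 1 / (n : ℝ) + ((n : ℝ) - (m : ℝ) - 1) / ((n : ℝ) * ((m : ℝ) + 1)) * L 2 +
        ∑ j ∈ Finset.Icc 1 m, L (if Odd j then 2 * j + 1 else 2 * j) /
          (((m - j + 1) * (m - j + 2) : ℕ) : ℝ))
    (hcond2 : 0 ≤ 1 / (n : ℝ) + ((n : ℝ) - (m : ℝ)) / ((n : ℝ) * (m : ℝ)) * L 2 +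
        ∑ j ∈ Finset.Icc 1 (m - 1), L (if Odd j then 2 * j + 3 else 2 * j + 2) /
          (((m - j) * (m - j + 1) : ℕ) : ℝ)) :
    ∃ D : Matrix (Fin n) (Fin n) ℝ, D.IsSymm ∧ DoublyStochastic D ∧
      D.charpoly = (X - C 1) * ∏ j ∈ Finset.Icc 2 n, (X - C (L j)) :=
  sdiep_4k3_general k n m hn hm L hub hdec hcond1 hcond2
end

section
/- Let n ≥ 6 and let 1 ≥ λ₂ ≥ ... ≥ λₙ ≥ −1 be real numbers with 1 + λ₂ + ... + λₙ ≥ 0. Set S = 1/n + Σ_{j=2}^{n−3} λ_j/((n−j+2)(n−j+1)) (so that the coefficient of λ₂ is 1/(n(n−1)), of λ₃ is 1/((n−1)(n−2)), ..., of λ_{n−3} is 1/20). If both S + λ_{n−2}/4 + λ_{n−1}/4 + λₙ/4 ≥ 0 and S − λ_{n−2}/4 − λ_{n−1}/4 + λₙ/4 ≥ 0 hold, then there exists an n×n symmetric doubly stochastic matrix whose eigenvalues, counted with algebraic multiplicity, are 1, λ₂, ..., λₙ. -/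
/-!
Take `D = ∑ⱼ μⱼ vⱼ vⱼᵀ / ‖vⱼ‖²` for an orthogonal basis `v₀, …, v_{n-1}` of `ℝⁿ`: the all-ones
vector with `μ = 1`, the Helmert vectors `(1, …, 1, -k, 0, …, 0)` of lengths `k = n - 1, …, 4`
with `μ = λ_{n+1-k}`, and the three nontrivial rows of a `4 × 4` Hadamard matrix, padded by zeros,
with `μ = λ_{n-2}, λ_{n-1}, λₙ`. Then `D` is symmetric with spectrum `1, λ₂, …, λₙ`, and it is
stochastic because the all-ones vector is an eigenvector for `1`.

The entries of `D` are explicit. On the leading `4 × 4` block they are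
`S + (±λ_{n-2} ± λ_{n-1} ± λₙ)/4`, and by monotonicity the two hypotheses are the worst sign
patterns. For an entry `(p, q)` with `p ≤ q` and `q ≥ 4`, compare every `λⱼ` involved with
`λ = λ_{n+1-q}`, the eigenvalue of the Helmert vector of length `q`, and use
`∑_{a ≤ k < b} 1/(k(k+1)) = 1/a - 1/b`: an off-diagonal entry is at least `(1 - λ)/n`, and a
diagonal entry is at least the left side of the first hypothesis.
-/

open Matrix Polynomial

/-- The quantity `S = 1/n + ∑_{j=2}^{n-3} λⱼ/((n-j+2)(n-j+1))`. -/
noncomputable def Squant (n : ℕ) (L : ℕ → ℝ) : ℝ :=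
  1 / (n : ℝ) + ∑ j ∈ Finset.Icc 2 (n - 3), L j / (((n - j + 2) * (n - j + 1) : ℕ) : ℝ)

open Finset

namespace Matrix

variable {K ι : Type*} [Field K] [Fintype ι] [DecidableEq ι]

theorem charpoly_eq_prod_of_mul_eq_mul_diagonal {A V : Matrix ι ι K} {μ : ι → K}
    (hV : IsUnit V) (h : A * V = V * diagonal μ) : A.charpoly = ∏ i, (X - C (μ i)) := by
  have hA : A = hV.unit.val * diagonal μ * hV.unit.val⁻¹ := by
    rw [IsUnit.unit_spec, ← h, Matrix.mul_assoc,
      mul_nonsing_inv _ ((isUnit_iff_isUnit_det V).1 hV), Matrix.mul_one]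
  rw [hA, charpoly_units_conj, charpoly_diagonal]

theorem isUnit_of_transpose_mul_self_eq_diagonal {V : Matrix ι ι K} {N : ι → K}
    (hVV : Vᵀ * V = diagonal N) (hN : ∀ i, N i ≠ 0) : IsUnit V := by
  have hdet : V.det * V.det = ∏ i, N i := by
    rw [← det_diagonal, ← hVV, det_mul, det_transpose]
  rw [isUnit_iff_isUnit_det, isUnit_iff_ne_zero]
  intro h0
  rw [h0, zero_mul] at hdet
  exact Finset.prod_ne_zero_iff.2 (fun i _ => hN i) hdet.symm

/-- When the columns of `V` are orthogonal with squared norms `N`, they are eigenvectors of this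
symmetric matrix with eigenvalues `μ`. -/
def ofOrthogonalEigenbasis (V : Matrix ι ι K) (N μ : ι → K) : Matrix ι ι K :=
  V * diagonal (fun j => μ j / N j) * Vᵀ

variable {V : Matrix ι ι K} {N μ : ι → K}

theorem ofOrthogonalEigenbasis_apply (i k : ι) :
    ofOrthogonalEigenbasis V N μ i k = ∑ j, μ j * V i j * V k j / N j := by
  rw [ofOrthogonalEigenbasis, mul_apply]
  simp only [mul_diagonal, transpose_apply]
  exact Finset.sum_congr rfl fun j _ => by ring

theorem isSymm_ofOrthogonalEigenbasis : (ofOrthogonalEigenbasis V N μ).IsSymm := by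
  simp [ofOrthogonalEigenbasis, IsSymm, transpose_mul, Matrix.mul_assoc]

theorem ofOrthogonalEigenbasis_mul (hVV : Vᵀ * V = diagonal N) (hN : ∀ i, N i ≠ 0) :
    ofOrthogonalEigenbasis V N μ * V = V * diagonal μ := by
  rw [ofOrthogonalEigenbasis, Matrix.mul_assoc, hVV, Matrix.mul_assoc, diagonal_mul_diagonal]
  congr 2
  funext j
  exact div_mul_cancel₀ _ (hN j)

theorem charpoly_ofOrthogonalEigenbasis (hVV : Vᵀ * V = diagonal N) (hN : ∀ i, N i ≠ 0) :
    (ofOrthogonalEigenbasis V N μ).charpoly = ∏ i, (X - C (μ i)) :=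
  charpoly_eq_prod_of_mul_eq_mul_diagonal (isUnit_of_transpose_mul_self_eq_diagonal hVV hN)
    (ofOrthogonalEigenbasis_mul hVV hN)

theorem sum_ofOrthogonalEigenbasis_apply (hVV : Vᵀ * V = diagonal N) (hN : ∀ i, N i ≠ 0)
    {j₀ : ι} (hV : ∀ i, V i j₀ = 1) (hμ : μ j₀ = 1) (i : ι) :
    ∑ k, ofOrthogonalEigenbasis V N μ i k = 1 := by
  have h := congrFun₂ (ofOrthogonalEigenbasis_mul (μ := μ) hVV hN) i j₀
  rw [mul_diagonal, hV, hμ, mul_one, mul_apply] at h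
  simpa only [hV, mul_one] using h

end Matrix

theorem sum_one_div_mul_add_one {a b : ℕ} (ha : 0 < a) (hab : a ≤ b) :
    ∑ k ∈ Ico a b, (1 : ℝ) / (k * (k + 1)) = 1 / a - 1 / b := by
  induction b, hab using Nat.le_induction with
  | base => simp
  | succ b hab ih =>
    have : (0 : ℝ) < b := by exact_mod_cast ha.trans_le hab
    rw [sum_Ico_succ_top hab, ih]
    push_cast
    field_simp
    ring

theorem sum_div_mul_add_one_le {a b : ℕ} (ha : 0 < a) (hab : a ≤ b) {f : ℕ → ℝ} {x : ℝ}
    (hf : ∀ k ∈ Ico a b, f k ≤ x) :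
    ∑ k ∈ Ico a b, f k / (k * (k + 1)) ≤ x * (1 / a - 1 / b) := by
  rw [← sum_one_div_mul_add_one ha hab, mul_sum]
  refine sum_le_sum fun k hk => ?_
  rw [mul_one_div]
  exact div_le_div_of_nonneg_right (hf k hk) (by positivity)

theorem le_sum_div_mul_add_one {a b : ℕ} (ha : 0 < a) (hab : a ≤ b) {f : ℕ → ℝ} {x : ℝ}
    (hf : ∀ k ∈ Ico a b, x ≤ f k) :
    x * (1 / a - 1 / b) ≤ ∑ k ∈ Ico a b, f k / (k * (k + 1)) := by
  rw [← sum_one_div_mul_add_one ha hab, mul_sum]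
  refine sum_le_sum fun k hk => ?_
  rw [mul_one_div]
  exact div_le_div_of_nonneg_right (hf k hk) (by positivity)

namespace Soules

def helmert (k p : ℕ) : ℝ := if p < k then 1 else if p = k then -k else 0

theorem helmert_of_lt {k p : ℕ} (h : p < k) : helmert k p = 1 := if_pos h

theorem helmert_self (k : ℕ) : helmert k k = -k := by simp [helmert]

theorem helmert_of_gt {k p : ℕ} (h : k < p) : helmert k p = 0 := by
  simp [helmert, h.ne', h.not_gt]

theorem sum_helmert_mul {k n : ℕ} (hk : k < n) (g : ℕ → ℝ) :
    ∑ p ∈ range n, helmert k p * g p = ∑ p ∈ range k, g p - k * g k := by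
  have htail : ∑ p ∈ Ico (k + 1) n, helmert k p * g p = 0 :=
    sum_eq_zero fun p hp => by rw [helmert_of_gt (mem_Ico.1 hp).1, zero_mul]
  rw [← sum_range_add_sum_Ico _ hk, htail, sum_range_succ, helmert_self,
    sum_congr rfl fun p hp => by rw [helmert_of_lt (mem_range.1 hp), one_mul]]
  ring

theorem sum_helmert {k n : ℕ} (hk : k < n) : ∑ p ∈ range n, helmert k p = 0 := by
  simpa using sum_helmert_mul hk 1

theorem sum_helmert_mul_self {k n : ℕ} (hk : k < n) :
    ∑ p ∈ range n, helmert k p * helmert k p = k * (k + 1) := by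
  rw [sum_helmert_mul hk, helmert_self,
    sum_congr rfl fun p hp => helmert_of_lt (mem_range.1 hp)]
  simp only [sum_const, card_range, nsmul_eq_mul, mul_one]
  ring

theorem sum_helmert_mul_helmert {k k' n : ℕ} (hk' : k' < k) (hk : k < n) :
    ∑ p ∈ range n, helmert k p * helmert k' p = 0 := by
  rw [sum_helmert_mul hk, sum_helmert hk', helmert_of_gt hk', mul_zero, sub_zero]

def hadamardRow : ℕ → ℕ → ℝ
  | 1, 0 => 1 | 1, 1 => 1 | 1, 2 => -1 | 1, 3 => -1
  | 2, 0 => 1 | 2, 1 => -1 | 2, 2 => 1 | 2, 3 => -1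
  | 3, 0 => 1 | 3, 1 => -1 | 3, 2 => -1 | 3, 3 => 1
  | _, _ => 0

theorem hadamardRow_of_four_le (i : ℕ) {p : ℕ} (hp : 4 ≤ p) : hadamardRow i p = 0 := by
  obtain ⟨p, rfl⟩ := Nat.exists_eq_add_of_le' hp
  rcases i with _ | _ | _ | _ | i <;> rfl

theorem sum_range_eq_of_four_le {m : ℕ} (hm : 4 ≤ m) {f : ℕ → ℝ}
    (hf : ∀ p, 4 ≤ p → f p = 0) : ∑ p ∈ range m, f p = f 0 + f 1 + f 2 + f 3 := by
  rw [← sum_range_add_sum_Ico _ hm, sum_eq_zero fun p hp => hf p (mem_Ico.1 hp).1]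
  simp [sum_range_succ]

theorem sum_hadamardRow {i m : ℕ} (hi : i ∈ Icc 1 3) (hm : 4 ≤ m) :
    ∑ p ∈ range m, hadamardRow i p = 0 := by
  rw [sum_range_eq_of_four_le hm fun p hp => hadamardRow_of_four_le i hp]
  obtain ⟨hi1, hi3⟩ := mem_Icc.1 hi
  interval_cases i <;> norm_num [hadamardRow]

theorem sum_hadamardRow_mul_hadamardRow {i j m : ℕ} (hi : i ∈ Icc 1 3) (hj : j ∈ Icc 1 3)
    (hm : 4 ≤ m) :
    ∑ p ∈ range m, hadamardRow i p * hadamardRow j p = if i = j then 4 else 0 := by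
  rw [sum_range_eq_of_four_le hm fun p hp => by rw [hadamardRow_of_four_le i hp, zero_mul]]
  obtain ⟨hi1, hi3⟩ := mem_Icc.1 hi
  obtain ⟨hj1, hj3⟩ := mem_Icc.1 hj
  interval_cases i <;> interval_cases j <;> norm_num [hadamardRow]

theorem sum_helmert_mul_hadamardRow {i k n : ℕ} (hi : i ∈ Icc 1 3) (hk4 : 4 ≤ k) (hk : k < n) :
    ∑ p ∈ range n, helmert k p * hadamardRow i p = 0 := by
  rw [sum_helmert_mul hk, sum_hadamardRow hi hk4, hadamardRow_of_four_le i hk4, mul_zero,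
    sub_zero]

theorem sum_mul_helmert_mul_helmert_of_lt {P Q a n : ℕ} (c : ℕ → ℝ) (hP : P < a) (hQ : Q < a) :
    ∑ k ∈ Ico a n, c k * (helmert k P * helmert k Q) = ∑ k ∈ Ico a n, c k :=
  sum_congr rfl fun k hk => by
    have hak := (mem_Ico.1 hk).1
    rw [helmert_of_lt (hP.trans_le hak), helmert_of_lt (hQ.trans_le hak), mul_one, mul_one]

theorem sum_mul_helmert_mul_helmert_of_le {P Q a n : ℕ} (c : ℕ → ℝ) (hPQ : P ≤ Q) (haQ : a ≤ Q)
    (hQn : Q < n) :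
    ∑ k ∈ Ico a n, c k * (helmert k P * helmert k Q)
      = c Q * (helmert Q P * helmert Q Q) + ∑ k ∈ Ico (Q + 1) n, c k := by
  have hlow : ∑ k ∈ Ico a Q, c k * (helmert k P * helmert k Q) = 0 :=
    sum_eq_zero fun k hk => by rw [helmert_of_gt (mem_Ico.1 hk).2, mul_zero, mul_zero]
  rw [← sum_Ico_consecutive _ haQ hQn.le, sum_eq_sum_Ico_succ_bot hQn, hlow, zero_add,
    sum_mul_helmert_mul_helmert_of_lt c (by omega) (by omega)]

noncomputable def eigvec (n j : ℕ) : ℕ → ℝ :=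
  if j = 0 then fun _ => 1 else if j + 4 ≤ n then helmert (n - j) else hadamardRow (j + 4 - n)

noncomputable def eigvecSqNorm (n j : ℕ) : ℝ :=
  if j = 0 then n else if j + 4 ≤ n then (n - j : ℕ) * ((n - j : ℕ) + 1) else 4

def eigval (L : ℕ → ℝ) (j : ℕ) : ℝ := if j = 0 then 1 else L (j + 1)

section eigvec

variable {n j : ℕ}

theorem eigvec_zero : eigvec n 0 = fun _ => 1 := if_pos rfl

theorem eigvec_of_add_four_le (hj0 : j ≠ 0) (hj : j + 4 ≤ n) : eigvec n j = helmert (n - j) := by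
  rw [eigvec, if_neg hj0, if_pos hj]

theorem eigvec_of_lt_add_four (hj0 : j ≠ 0) (hj : n < j + 4) :
    eigvec n j = hadamardRow (j + 4 - n) := by
  rw [eigvec, if_neg hj0, if_neg (by omega)]

theorem eigvecSqNorm_zero : eigvecSqNorm n 0 = n := if_pos rfl

theorem eigvecSqNorm_of_add_four_le (hj0 : j ≠ 0) (hj : j + 4 ≤ n) :
    eigvecSqNorm n j = (n - j : ℕ) * ((n - j : ℕ) + 1) := by
  rw [eigvecSqNorm, if_neg hj0, if_pos hj]

theorem eigvecSqNorm_of_lt_add_four (hj0 : j ≠ 0) (hj : n < j + 4) : eigvecSqNorm n j = 4 := by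
  rw [eigvecSqNorm, if_neg hj0, if_neg (by omega)]

theorem eigvecSqNorm_pos (hn : 0 < n) : 0 < eigvecSqNorm n j := by
  by_cases hj0 : j = 0
  · rw [hj0, eigvecSqNorm_zero]; positivity
  rcases le_or_gt (j + 4) n with hj4 | hj4
  · have : 0 < n - j := by omega
    rw [eigvecSqNorm_of_add_four_le hj0 hj4]; positivity
  · rw [eigvecSqNorm_of_lt_add_four hj0 hj4]; norm_num

theorem sum_eigvec_mul_eigvec_of_le {i : ℕ} (hn : 4 ≤ n) (hij : i ≤ j) (hj : j < n) :
    ∑ p ∈ range n, eigvec n i p * eigvec n j p = if i = j then eigvecSqNorm n i else 0 := by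
  have hadamard_index {j : ℕ} (hj : j < n) (hj4 : n < j + 4) : j + 4 - n ∈ Icc 1 3 := by
    simp only [mem_Icc]; omega
  by_cases hi0 : i = 0
  · subst hi0
    by_cases hj0 : j = 0
    · subst hj0; simp [eigvec_zero, eigvecSqNorm_zero]
    rw [if_neg (Ne.symm hj0), eigvec_zero]
    simp only [one_mul]
    rcases le_or_gt (j + 4) n with hj4 | hj4
    · rw [eigvec_of_add_four_le hj0 hj4, sum_helmert (by omega)]
    · rw [eigvec_of_lt_add_four hj0 hj4, sum_hadamardRow (hadamard_index hj hj4) hn]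
  have hj0 : j ≠ 0 := by omega
  rcases le_or_gt (i + 4) n with hi4 | hi4
  · rw [eigvec_of_add_four_le hi0 hi4]
    rcases eq_or_ne i j with rfl | hij'
    · rw [if_pos rfl, eigvecSqNorm_of_add_four_le hi0 hi4, eigvec_of_add_four_le hi0 hi4,
        sum_helmert_mul_self (by omega)]
    rw [if_neg hij']
    rcases le_or_gt (j + 4) n with hj4 | hj4
    · rw [eigvec_of_add_four_le hj0 hj4, sum_helmert_mul_helmert (by omega) (by omega)]
    · rw [eigvec_of_lt_add_four hj0 hj4,
        sum_helmert_mul_hadamardRow (hadamard_index hj hj4) (by omega) (by omega)]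
  · rw [eigvec_of_lt_add_four hi0 hi4, eigvec_of_lt_add_four hj0 (by omega),
      eigvecSqNorm_of_lt_add_four hi0 hi4,
      sum_hadamardRow_mul_hadamardRow (hadamard_index (by omega) hi4)
        (hadamard_index hj (by omega)) hn]
    exact if_congr (by omega) rfl rfl

theorem sum_eigvec_mul_eigvec {i : ℕ} (hn : 4 ≤ n) (hi : i < n) (hj : j < n) :
    ∑ p ∈ range n, eigvec n i p * eigvec n j p = if i = j then eigvecSqNorm n i else 0 := by
  rcases le_total i j with hij | hji
  · exact sum_eigvec_mul_eigvec_of_le hn hij hj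
  · simp_rw [mul_comm (eigvec n i _), sum_eigvec_mul_eigvec_of_le hn hji hi, eq_comm (a := j)]
    split_ifs with h
    · rw [h]
    · rfl

end eigvec

noncomputable def eigvecMatrix (n : ℕ) : Matrix (Fin n) (Fin n) ℝ := of fun p j => eigvec n j p

theorem transpose_mul_eigvecMatrix {n : ℕ} (hn : 4 ≤ n) :
    (eigvecMatrix n)ᵀ * eigvecMatrix n = diagonal fun j : Fin n => eigvecSqNorm n j := by
  ext i j
  simp only [mul_apply, diagonal_apply, transpose_apply, eigvecMatrix, of_apply]
  rw [Fin.sum_univ_eq_sum_range (fun p => eigvec n i p * eigvec n j p),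
    sum_eigvec_mul_eigvec hn i.isLt j.isLt]
  exact if_congr Fin.val_inj rfl rfl

noncomputable def soulesMatrix (n : ℕ) (L : ℕ → ℝ) : Matrix (Fin n) (Fin n) ℝ :=
  ofOrthogonalEigenbasis (eigvecMatrix n) (fun j : Fin n => eigvecSqNorm n j)
    (fun j : Fin n => eigval L j)

variable {n : ℕ} {L : ℕ → ℝ}

theorem isSymm_soulesMatrix : (soulesMatrix n L).IsSymm := isSymm_ofOrthogonalEigenbasis

theorem prod_eigval (hn : 0 < n) :
    ∏ j : Fin n, (X - C (eigval L j)) = (X - C 1) * ∏ j ∈ Icc 2 n, (X - C (L j)) := by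
  obtain ⟨m, rfl⟩ := Nat.exists_eq_add_of_le' hn
  have hIcc : Icc 2 (m + 1) = Ico (0 + 2) (m + 2) := by ext; simp; omega
  simp only [Fin.prod_univ_succ, Fin.val_zero, Fin.val_succ, eigval, if_pos, add_eq_zero,
    one_ne_zero, and_false, if_false]
  rw [Fin.prod_univ_eq_prod_range (fun j => X - C (L (j + 1 + 1))), hIcc, ← prod_Ico_add',
    range_eq_Ico]

theorem charpoly_soulesMatrix (hn : 4 ≤ n) :
    (soulesMatrix n L).charpoly = (X - C 1) * ∏ j ∈ Icc 2 n, (X - C (L j)) := by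
  rw [soulesMatrix, charpoly_ofOrthogonalEigenbasis (transpose_mul_eigvecMatrix hn)
    fun j => (eigvecSqNorm_pos (by omega)).ne', prod_eigval (by omega)]

theorem sum_soulesMatrix_apply (hn : 4 ≤ n) (P : Fin n) : ∑ Q, soulesMatrix n L P Q = 1 :=
  sum_ofOrthogonalEigenbasis_apply (transpose_mul_eigvecMatrix hn)
    (fun j => (eigvecSqNorm_pos (by omega)).ne') (j₀ := (⟨0, by omega⟩ : Fin n))
    (fun _ => by simp [eigvecMatrix, eigvec_zero]) (if_pos rfl) P

theorem sum_helmert_columns (hn : 4 ≤ n) (p q : ℕ) :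
    ∑ j ∈ Ico 1 (n - 3), eigval L j * eigvec n j p * eigvec n j q / eigvecSqNorm n j
      = ∑ k ∈ Ico 4 n, L (n + 1 - k) / (k * (k + 1)) * (helmert k p * helmert k q) := by
  rw [show Ico 4 n = Ico (n + 1 - (n - 3)) (n + 1 - 1) by congr 1; omega,
    ← sum_Ico_reflect _ 1 (by omega)]
  refine sum_congr rfl fun j hj => ?_
  obtain ⟨hj1, hjn⟩ := mem_Ico.1 hj
  have hj0 : j ≠ 0 := by omega
  have hj4 : j + 4 ≤ n := by omega
  rw [eigval, if_neg hj0, eigvec_of_add_four_le hj0 hj4, eigvecSqNorm_of_add_four_le hj0 hj4,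
    show n + 1 - (n - j) = j + 1 by omega]
  ring

theorem sum_hadamard_columns (hn : 4 ≤ n) (p q : ℕ) :
    ∑ j ∈ Ico (n - 3) n, eigval L j * eigvec n j p * eigvec n j q / eigvecSqNorm n j
      = (L (n - 2) * (hadamardRow 1 p * hadamardRow 1 q)
        + L (n - 1) * (hadamardRow 2 p * hadamardRow 2 q)
        + L n * (hadamardRow 3 p * hadamardRow 3 q)) / 4 := by
  have hcol {j : ℕ} (hj0 : j ≠ 0) (hj : n < j + 4) :
      eigval L j * eigvec n j p * eigvec n j q / eigvecSqNorm n j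
        = L (j + 1) * (hadamardRow (j + 4 - n) p * hadamardRow (j + 4 - n) q) / 4 := by
    rw [eigval, if_neg hj0, eigvec_of_lt_add_four hj0 hj, eigvecSqNorm_of_lt_add_four hj0 hj]
    ring
  rw [show Ico (n - 3) n = {n - 3, n - 2, n - 1} by ext; simp; omega,
    sum_insert (by simp; omega), sum_insert (by simp; omega), sum_singleton,
    hcol (by omega) (by omega), hcol (by omega) (by omega), hcol (by omega) (by omega),
    show n - 3 + 4 - n = 1 by omega, show n - 2 + 4 - n = 2 by omega,
    show n - 1 + 4 - n = 3 by omega, show n - 3 + 1 = n - 2 by omega,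
    show n - 2 + 1 = n - 1 by omega, show n - 1 + 1 = n by omega]
  ring

theorem soulesMatrix_apply (hn : 4 ≤ n) (P Q : Fin n) :
    soulesMatrix n L P Q = 1 / n
      + ∑ k ∈ Ico 4 n, L (n + 1 - k) / (k * (k + 1)) * (helmert k P * helmert k Q)
      + (L (n - 2) * (hadamardRow 1 P * hadamardRow 1 Q)
        + L (n - 1) * (hadamardRow 2 P * hadamardRow 2 Q)
        + L n * (hadamardRow 3 P * hadamardRow 3 Q)) / 4 := by
  rw [soulesMatrix, ofOrthogonalEigenbasis_apply]
  simp only [eigvecMatrix, of_apply]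
  rw [Fin.sum_univ_eq_sum_range
      (fun j => eigval L j * eigvec n j P * eigvec n j Q / eigvecSqNorm n j), range_eq_Ico,
    ← sum_Ico_consecutive _ (Nat.zero_le _) (by omega : n - 3 ≤ n),
    ← sum_Ico_consecutive _ (Nat.zero_le 1) (by omega : 1 ≤ n - 3),
    sum_helmert_columns hn, sum_hadamard_columns hn]
  simp [eigval, eigvec_zero, eigvecSqNorm_zero]

theorem Squant_eq (hn : 4 ≤ n) :
    Squant n L = 1 / n + ∑ k ∈ Ico 4 n, L (n + 1 - k) / (k * (k + 1)) := by
  rw [Squant, show Icc 2 (n - 3) = Ico 2 (n - 2) by ext; simp; omega,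
    show Ico 4 n = Ico (n + 1 + 1 - (n - 2)) (n + 1 + 1 - 2) by congr 1; omega,
    ← sum_Ico_reflect _ 2 (by omega)]
  refine congrArg _ (sum_congr rfl fun j hj => ?_)
  obtain ⟨hj2, hjn⟩ := mem_Ico.1 hj
  rw [show n + 1 - (n + 1 - j) = j by omega]
  push_cast [show j ≤ n by omega, show j ≤ n + 1 by omega]
  ring

theorem soulesMatrix_apply_of_lt_four (hn : 4 ≤ n) {P Q : Fin n} (hP : (P : ℕ) < 4)
    (hQ : (Q : ℕ) < 4) :
    soulesMatrix n L P Q = Squant n L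
      + (L (n - 2) * (hadamardRow 1 P * hadamardRow 1 Q)
        + L (n - 1) * (hadamardRow 2 P * hadamardRow 2 Q)
        + L n * (hadamardRow 3 P * hadamardRow 3 Q)) / 4 := by
  rw [soulesMatrix_apply hn, sum_mul_helmert_mul_helmert_of_lt _ hP hQ, Squant_eq hn]

theorem soulesMatrix_apply_of_lt (hn : 4 ≤ n) {P Q : Fin n} (hPQ : P < Q) (hQ : 4 ≤ (Q : ℕ)) :
    soulesMatrix n L P Q = 1 / n + ∑ k ∈ Ico ((Q : ℕ) + 1) n, L (n + 1 - k) / (k * (k + 1))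
      - L (n + 1 - Q) * (1 / (Q + 1)) := by
  have hQ0 : (0 : ℝ) < Q := by exact_mod_cast (by omega : 0 < (Q : ℕ))
  rw [soulesMatrix_apply hn, sum_mul_helmert_mul_helmert_of_le _ hPQ.le hQ Q.isLt,
    helmert_of_lt hPQ, helmert_self]
  simp only [hadamardRow_of_four_le _ hQ, mul_zero, add_zero, zero_div]
  field_simp
  ring

theorem soulesMatrix_apply_self (hn : 4 ≤ n) {Q : Fin n} (hQ : 4 ≤ (Q : ℕ)) :
    soulesMatrix n L Q Q = 1 / n + ∑ k ∈ Ico ((Q : ℕ) + 1) n, L (n + 1 - k) / (k * (k + 1))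
      + L (n + 1 - Q) * (1 - 1 / (Q + 1)) := by
  have hQ0 : (0 : ℝ) < Q := by exact_mod_cast (by omega : 0 < (Q : ℕ))
  rw [soulesMatrix_apply hn, sum_mul_helmert_mul_helmert_of_le _ le_rfl hQ Q.isLt, helmert_self]
  simp only [hadamardRow_of_four_le _ hQ, mul_zero, add_zero, zero_div]
  field_simp
  ring

theorem soulesMatrix_nonneg_of_lt_four (hn : 4 ≤ n) (hL : AntitoneOn L (Set.Icc 2 n))
    (hcond1 : 0 ≤ Squant n L + L (n - 2) / 4 + L (n - 1) / 4 + L n / 4)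
    (hcond2 : 0 ≤ Squant n L - L (n - 2) / 4 - L (n - 1) / 4 + L n / 4)
    {P Q : Fin n} (hP : (P : ℕ) < 4) (hQ : (Q : ℕ) < 4) : 0 ≤ soulesMatrix n L P Q := by
  have h2 : L n ≤ L (n - 2) := hL ⟨by omega, by omega⟩ ⟨by omega, le_rfl⟩ (by omega)
  have h1 : L n ≤ L (n - 1) := hL ⟨by omega, by omega⟩ ⟨by omega, le_rfl⟩ (by omega)
  rw [soulesMatrix_apply_of_lt_four hn hP hQ]
  generalize (P : ℕ) = p at hP ⊢
  generalize (Q : ℕ) = q at hQ ⊢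
  interval_cases p <;> interval_cases q <;> norm_num [hadamardRow] <;> linarith

theorem soulesMatrix_nonneg_of_lt (hn : 4 ≤ n) (hL : AntitoneOn L (Set.Icc 2 n)) (hub : L 2 ≤ 1)
    {P Q : Fin n} (hPQ : P < Q) (hQ : 4 ≤ (Q : ℕ)) : 0 ≤ soulesMatrix n L P Q := by
  have hQn := Q.isLt
  have hx : L (n + 1 - Q) ≤ 1 :=
    (hL ⟨le_rfl, by omega⟩ ⟨by omega, by omega⟩ (by omega)).trans hub
  have htail : L (n + 1 - Q) * (1 / ((Q : ℕ) + 1 : ℕ) - 1 / n)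
      ≤ ∑ k ∈ Ico ((Q : ℕ) + 1) n, L (n + 1 - k) / (k * (k + 1)) :=
    le_sum_div_mul_add_one (by omega) hQn fun k hk => by
      obtain ⟨hk1, hk2⟩ := mem_Ico.1 hk
      exact hL ⟨by omega, by omega⟩ ⟨by omega, by omega⟩ (by omega)
  have hpos : 0 ≤ (1 - L (n + 1 - Q)) * (1 / n) := mul_nonneg (by linarith) (by positivity)
  rw [soulesMatrix_apply_of_lt hn hPQ hQ]
  push_cast at htail
  linarith

theorem soulesMatrix_nonneg_self (hn : 4 ≤ n) (hL : AntitoneOn L (Set.Icc 2 n))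
    (hcond1 : 0 ≤ Squant n L + L (n - 2) / 4 + L (n - 1) / 4 + L n / 4)
    {Q : Fin n} (hQ : 4 ≤ (Q : ℕ)) : 0 ≤ soulesMatrix n L Q Q := by
  have hQn := Q.isLt
  have h2 : L (n - 2) ≤ L (n + 1 - Q) := hL ⟨by omega, by omega⟩ ⟨by omega, by omega⟩ (by omega)
  have h1 : L (n - 1) ≤ L (n + 1 - Q) := hL ⟨by omega, by omega⟩ ⟨by omega, by omega⟩ (by omega)
  have h0 : L n ≤ L (n + 1 - Q) := hL ⟨by omega, by omega⟩ ⟨by omega, le_rfl⟩ (by omega)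
  have hhead : ∑ k ∈ Ico 4 ((Q : ℕ) + 1), L (n + 1 - k) / (k * (k + 1))
      ≤ L (n + 1 - Q) * (1 / (4 : ℕ) - 1 / ((Q : ℕ) + 1 : ℕ)) :=
    sum_div_mul_add_one_le (by norm_num) (by omega) fun k hk => by
      obtain ⟨hk1, hk2⟩ := mem_Ico.1 hk
      exact hL ⟨by omega, by omega⟩ ⟨by omega, by omega⟩ (by omega)
  rw [Squant_eq hn, ← sum_Ico_consecutive _ (by omega : 4 ≤ (Q : ℕ) + 1) hQn] at hcond1
  rw [soulesMatrix_apply_self hn hQ]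
  push_cast at hhead
  linarith

theorem soulesMatrix_nonneg (hn : 4 ≤ n) (hL : AntitoneOn L (Set.Icc 2 n)) (hub : L 2 ≤ 1)
    (hcond1 : 0 ≤ Squant n L + L (n - 2) / 4 + L (n - 1) / 4 + L n / 4)
    (hcond2 : 0 ≤ Squant n L - L (n - 2) / 4 - L (n - 1) / 4 + L n / 4) (P Q : Fin n) :
    0 ≤ soulesMatrix n L P Q := by
  wlog hPQ : P ≤ Q generalizing P Q
  · rw [← isSymm_soulesMatrix.apply]
    exact this Q P (le_of_not_ge hPQ)
  rcases lt_or_ge (Q : ℕ) 4 with hQ | hQ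
  · exact soulesMatrix_nonneg_of_lt_four hn hL hcond1 hcond2 (by omega) hQ
  rcases hPQ.lt_or_eq with hPQ | rfl
  · exact soulesMatrix_nonneg_of_lt hn hL hub hPQ hQ
  · exact soulesMatrix_nonneg_self hn hL hcond1 hQ

theorem doublyStochastic_soulesMatrix (hn : 4 ≤ n) (hL : AntitoneOn L (Set.Icc 2 n))
    (hub : L 2 ≤ 1) (hcond1 : 0 ≤ Squant n L + L (n - 2) / 4 + L (n - 1) / 4 + L n / 4)
    (hcond2 : 0 ≤ Squant n L - L (n - 2) / 4 - L (n - 1) / 4 + L n / 4) :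
    DoublyStochastic (soulesMatrix n L) :=
  ⟨soulesMatrix_nonneg hn hL hub hcond1 hcond2, sum_soulesMatrix_apply hn, fun Q => by
    simpa only [isSymm_soulesMatrix.apply] using sum_soulesMatrix_apply hn Q⟩

end Soules

theorem sdiep_W_general (n : ℕ) (hn : 6 ≤ n) (L : ℕ → ℝ) (hub : L 2 ≤ 1)
    (hdec : ∀ j, 2 ≤ j → j < n → L (j + 1) ≤ L j)
    (hcond1 : 0 ≤ Squant n L + L (n - 2) / 4 + L (n - 1) / 4 + L n / 4)
    (hcond2 : 0 ≤ Squant n L - L (n - 2) / 4 - L (n - 1) / 4 + L n / 4) :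
    ∃ D : Matrix (Fin n) (Fin n) ℝ, D.IsSymm ∧ DoublyStochastic D ∧
      D.charpoly = (X - C 1) * ∏ j ∈ Finset.Icc 2 n, (X - C (L j)) := by
  have hn4 : 4 ≤ n := by omega
  have hL : AntitoneOn L (Set.Icc 2 n) :=
    antitoneOn_of_succ_le Set.ordConnected_Icc fun j _ hj hj1 =>
      hdec j hj.1 (Nat.lt_of_succ_le hj1.2)
  exact ⟨Soules.soulesMatrix n L, Soules.isSymm_soulesMatrix,
    Soules.doublyStochastic_soulesMatrix hn4 hL hub hcond1 hcond2,
    Soules.charpoly_soulesMatrix hn4⟩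

/-- For `n ≥ 6`, `1 ≥ λ₂ ≥ ⋯ ≥ λₙ ≥ -1` with `1 + λ₂ + ⋯ + λₙ ≥ 0`: if both
`S + λ_{n-2}/4 + λ_{n-1}/4 + λₙ/4 ≥ 0` and `S - λ_{n-2}/4 - λ_{n-1}/4 + λₙ/4 ≥ 0`, then
`1, λ₂, …, λₙ` is the spectrum of an `n × n` symmetric doubly stochastic matrix. -/
theorem sdiep_W (n : ℕ) (hn : 6 ≤ n) (L : ℕ → ℝ) (hub : L 2 ≤ 1)
    (hdec : ∀ j, 2 ≤ j → j < n → L (j + 1) ≤ L j)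
    (hlb : -1 ≤ L n)
    (htr : 0 ≤ 1 + ∑ j ∈ Finset.Icc 2 n, L j)
    (hcond1 : 0 ≤ Squant n L + L (n - 2) / 4 + L (n - 1) / 4 + L n / 4)
    (hcond2 : 0 ≤ Squant n L - L (n - 2) / 4 - L (n - 1) / 4 + L n / 4) :
    ∃ D : Matrix (Fin n) (Fin n) ℝ, D.IsSymm ∧ DoublyStochastic D ∧
      D.charpoly = (X - C 1) * ∏ j ∈ Finset.Icc 2 n, (X - C (L j)) :=
  sdiep_W_general n hn L hub hdec hcond1 hcond2
end
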